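/- arXiv:1712.07411 — 5 statements merged into one kernel-verified Lean document; each statement's English description precedes it below -/
import Mathlib

section
/- For real symmetric positive semi-definite matrices Σ and M of size n×n, and J = 𝟏𝟏ᵀ the all-ones matrix, 𝟏ᵀ Σ M Σ 𝟏 ≤ tr(Σ M) · tr(Σ J). -/
open Matrix
open scoped MatrixOrder

private lemma psd_trace_nonneg {n : ℕ} {A : Matrix (Fin n) (Fin n) ℝ} (hA : A.PosSemidef) :
    0 ≤ A.trace := by
  apply Finset.sum_nonneg
  intro i _
  have h := hA.dotProduct_mulVec_nonneg (Pi.single i 1)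
  simpa [dotProduct, mulVec, Pi.single_apply, Finset.sum_ite_eq, Finset.mul_sum] using h

private lemma psd_trace_mul_nonneg {n : ℕ} {A B : Matrix (Fin n) (Fin n) ℝ}
    (hA : A.PosSemidef) (hB : B.PosSemidef) : 0 ≤ (A * B).trace := by
  have hRR : CFC.sqrt A * CFC.sqrt A = A := CFC.sqrt_mul_sqrt_self A hA.nonneg
  have h1 : A * B = CFC.sqrt A * (CFC.sqrt A * B) := by rw [← mul_assoc, hRR]
  have h2 : (CFC.sqrt A * (CFC.sqrt A * B)).trace = (CFC.sqrt A * B * CFC.sqrt A).trace := by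
    rw [trace_mul_comm, mul_assoc]
  have hpsd : (CFC.sqrt A * B * CFC.sqrt A).PosSemidef := by
    have h := hB.conjTranspose_mul_mul_same (CFC.sqrt A)
    rwa [(CFC.sqrt_nonneg A).posSemidef.1] at h
  rw [h1, h2]
  exact psd_trace_nonneg hpsd

private lemma psd_cauchy_schwarz {n : ℕ} {S : Matrix (Fin n) (Fin n) ℝ} (hS : S.PosSemidef)
    (x y : Fin n → ℝ) :
    (x ⬝ᵥ S *ᵥ y) ^ 2 ≤ (x ⬝ᵥ S *ᵥ x) * (y ⬝ᵥ S *ᵥ y) := by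
  have hRR : CFC.sqrt S * CFC.sqrt S = S := CFC.sqrt_mul_sqrt_self S hS.nonneg
  have hRsym : (CFC.sqrt S)ᵀ = CFC.sqrt S := by
    have h := (CFC.sqrt_nonneg S).posSemidef.1
    ext i j
    have := congrFun (congrFun h i) j
    simpa [conjTranspose_apply] using this
  have key : ∀ a b : Fin n → ℝ, a ⬝ᵥ S *ᵥ b = (CFC.sqrt S *ᵥ a) ⬝ᵥ (CFC.sqrt S *ᵥ b) := by
    intro a b
    conv_lhs => rw [← hRR]
    rw [← mulVec_mulVec, dotProduct_mulVec, ← mulVec_transpose, hRsym]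
  rw [key x y, key x x, key y y]
  have h := Finset.sum_mul_sq_le_sq_mul_sq Finset.univ (CFC.sqrt S *ᵥ x) (CFC.sqrt S *ᵥ y)
  simpa [dotProduct, pow_two] using h

private lemma trace_mul_vecMulVec {n : ℕ} (A : Matrix (Fin n) (Fin n) ℝ) (u v : Fin n → ℝ) :
    (A * vecMulVec u v).trace = v ⬝ᵥ A *ᵥ u := by
  simp only [Matrix.trace, Matrix.diag_apply, Matrix.mul_apply, vecMulVec_apply, dotProduct,
    mulVec, Finset.mul_sum]
  apply Finset.sum_congr rfl
  intro i _
  apply Finset.sum_congr rfl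
  intro j _
  ring

private lemma dot_vecMulVec {n : ℕ} (v x : Fin n → ℝ) :
    x ⬝ᵥ (vecMulVec v v) *ᵥ x = (v ⬝ᵥ x) ^ 2 := by
  simp only [dotProduct, mulVec, vecMulVec_apply, pow_two, Finset.sum_mul, Finset.mul_sum]
  apply Finset.sum_congr rfl
  intro i _
  apply Finset.sum_congr rfl
  intro j _
  ring

theorem ones_quad_le_trace_mul_trace {n : ℕ} (S M : Matrix (Fin n) (Fin n) ℝ)
    (hS : S.PosSemidef) (hM : M.PosSemidef) :
    (1 : Fin n → ℝ) ⬝ᵥ (S * M * S) *ᵥ (1 : Fin n → ℝ) ≤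
      Matrix.trace (S * M) * Matrix.trace (S * Matrix.vecMulVec (1 : Fin n → ℝ) 1) := by
  classical
  set v : Fin n → ℝ := S *ᵥ 1 with hv
  set c : ℝ := (1 : Fin n → ℝ) ⬝ᵥ S *ᵥ (1 : Fin n → ℝ) with hc
  have hSsym : Sᵀ = S := by
    have h := hS.1
    ext i j
    have := congrFun (congrFun h i) j
    simpa [conjTranspose_apply] using this
  have hvdot : ∀ x : Fin n → ℝ, v ⬝ᵥ x = (1 : Fin n → ℝ) ⬝ᵥ S *ᵥ x := by
    intro x
    rw [hv, dotProduct_comm, dotProduct_mulVec, ← mulVec_transpose, hSsym, dotProduct_comm]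
  -- LHS rewrite
  have hL : (1 : Fin n → ℝ) ⬝ᵥ (S * M * S) *ᵥ (1 : Fin n → ℝ) = v ⬝ᵥ M *ᵥ v := by
    rw [← mulVec_mulVec, ← mulVec_mulVec, dotProduct_mulVec, ← mulVec_transpose, hSsym, ← hv]
  -- the PSD gap matrix
  have hD : (c • S - vecMulVec v v).PosSemidef := by
    refine PosSemidef.of_dotProduct_mulVec_nonneg ?_ ?_
    · show (c • S - vecMulVec v v)ᴴ = _
      have hvmv : (vecMulVec v v)ᴴ = vecMulVec v v := by
        ext i j
        simp [conjTranspose_apply, vecMulVec_apply, mul_comm]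
      rw [conjTranspose_sub, conjTranspose_smul, hvmv]
      simp [hSsym]
    · intro x
      have hx : star x = x := by simp
      rw [hx, sub_mulVec, dotProduct_sub, smul_mulVec, dotProduct_smul, dot_vecMulVec,
        sub_nonneg, hvdot x, smul_eq_mul]
      calc ((1 : Fin n → ℝ) ⬝ᵥ S *ᵥ x) ^ 2
          ≤ ((1 : Fin n → ℝ) ⬝ᵥ S *ᵥ 1) * (x ⬝ᵥ S *ᵥ x) := psd_cauchy_schwarz hS 1 x
        _ = c * (x ⬝ᵥ S *ᵥ x) := by rw [hc]
  have hgap : 0 ≤ (M * (c • S - vecMulVec v v)).trace := psd_trace_mul_nonneg hM hD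
  have hexpand : (M * (c • S - vecMulVec v v)).trace
      = c * (M * S).trace - v ⬝ᵥ M *ᵥ v := by
    rw [mul_sub, trace_sub, Matrix.mul_smul, trace_smul, smul_eq_mul, trace_mul_vecMulVec]
  have hRHS : Matrix.trace (S * Matrix.vecMulVec (1 : Fin n → ℝ) 1) = c := by
    rw [trace_mul_vecMulVec, hc]
  rw [hL, hRHS, trace_mul_comm S M]
  have := hgap
  rw [hexpand] at this
  linarith
end

section
/- Sherman–Morrison for pseudoinverses of Laplacians: if L is the Laplacian of a connected graph and m = e_i − e_j, β > 0, then (L + β m mᵀ)⁺ = L⁺ − (β⁻¹ + mᵀL⁺m)⁻¹ L⁺ m mᵀ L⁺. -/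
open Matrix

/-- The Moore–Penrose pseudoinverse conditions for real square matrices. -/
def IsMoorePenrose {n : ℕ} (A P : Matrix (Fin n) (Fin n) ℝ) : Prop :=
  A * P * A = A ∧ P * A * P = P ∧ (A * P)ᵀ = A * P ∧ (P * A)ᵀ = P * A

private lemma mul_vvm {n : ℕ} (A : Matrix (Fin n) (Fin n) ℝ) (u v : Fin n → ℝ) :
    A * vecMulVec u v = vecMulVec (A *ᵥ u) v := by
  ext a b
  simp only [Matrix.mul_apply, vecMulVec_apply, Matrix.mulVec, dotProduct,
    Finset.sum_mul, mul_assoc]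

private lemma vvm_mul {n : ℕ} (u v : Fin n → ℝ) (A : Matrix (Fin n) (Fin n) ℝ) :
    vecMulVec u v * A = vecMulVec u (v ᵥ* A) := by
  ext a b
  simp only [Matrix.mul_apply, vecMulVec_apply, Matrix.vecMul, dotProduct,
    Finset.mul_sum, mul_assoc]

private lemma vecMul_vvm {n : ℕ} (x u v : Fin n → ℝ) :
    x ᵥ* vecMulVec u v = (x ⬝ᵥ u) • v := by
  ext b
  simp only [Matrix.vecMul, vecMulVec_apply, dotProduct, Pi.smul_apply, smul_eq_mul,
    Finset.sum_mul]
  apply Finset.sum_congr rfl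
  intro k _
  ring

private lemma vvm_smul {n : ℕ} (u : Fin n → ℝ) (c : ℝ) (v : Fin n → ℝ) :
    vecMulVec u (c • v) = c • vecMulVec u v := by
  ext a b
  simp only [vecMulVec_apply, Pi.smul_apply, smul_eq_mul, Matrix.smul_apply]
  ring

private lemma vvm_transpose {n : ℕ} (u v : Fin n → ℝ) :
    (vecMulVec u v)ᵀ = vecMulVec v u := by
  ext a b
  simp [vecMulVec_apply, mul_comm]

private lemma mp_unique {n : ℕ} {A P P' : Matrix (Fin n) (Fin n) ℝ}
    (h : IsMoorePenrose A P) (h' : IsMoorePenrose A P') : P = P' := by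
  obtain ⟨a1, a2, a3, a4⟩ := h
  obtain ⟨b1, b2, b3, b4⟩ := h'
  have hAP : A * P = A * P' := by
    calc A * P = (A * P' * A) * P := by rw [b1]
      _ = (A * P') * (A * P) := by simp only [Matrix.mul_assoc]
      _ = (A * P')ᵀ * (A * P)ᵀ := by rw [a3, b3]
      _ = ((A * P) * (A * P'))ᵀ := by rw [← Matrix.transpose_mul]
      _ = ((A * P * A) * P')ᵀ := by simp only [Matrix.mul_assoc]
      _ = (A * P')ᵀ := by rw [a1]
      _ = A * P' := b3
  have hPA : P * A = P' * A := by
    calc P * A = P * (A * P' * A) := by rw [b1]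
      _ = (P * A) * (P' * A) := by simp only [Matrix.mul_assoc]
      _ = (P * A)ᵀ * (P' * A)ᵀ := by rw [a4, b4]
      _ = ((P' * A) * (P * A))ᵀ := by rw [← Matrix.transpose_mul]
      _ = (P' * (A * P * A))ᵀ := by simp only [Matrix.mul_assoc]
      _ = (P' * A)ᵀ := by rw [a1]
      _ = P' * A := b4
  calc P = P * A * P := a2.symm
    _ = P * (A * P') := by rw [Matrix.mul_assoc, hAP]
    _ = (P * A) * P' := by rw [Matrix.mul_assoc]
    _ = P' * A * P' := by rw [hPA]
    _ = P' := b2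

theorem sherman_morrison_pseudoinverse {n : ℕ}
    (L Lplus : Matrix (Fin n) (Fin n) ℝ)
    (hL : L.PosSemidef)
    (hker : ∀ x : Fin n → ℝ, L *ᵥ x = 0 ↔ ∃ c : ℝ, x = c • (1 : Fin n → ℝ))
    (hMP : IsMoorePenrose L Lplus)
    (i j : Fin n) (hij : i ≠ j) (β : ℝ) (hβ : 0 < β) :
    IsMoorePenrose
      (L + β • Matrix.vecMulVec
        ((Pi.single i 1 - Pi.single j 1 : Fin n → ℝ))
        ((Pi.single i 1 - Pi.single j 1 : Fin n → ℝ)))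
      (Lplus -
        (β⁻¹ + (Pi.single i 1 - Pi.single j 1 : Fin n → ℝ) ⬝ᵥ Lplus *ᵥ
            (Pi.single i 1 - Pi.single j 1 : Fin n → ℝ))⁻¹ •
          (Lplus * Matrix.vecMulVec
              ((Pi.single i 1 - Pi.single j 1 : Fin n → ℝ))
              ((Pi.single i 1 - Pi.single j 1 : Fin n → ℝ)) * Lplus)) := by
  obtain ⟨h1, h2, h3, h4⟩ := hMP
  have hLsym : Lᵀ = L := (by simpa using hL.1 : L.IsSymm).eq
  -- Lplusᵀ is also a Moore-Penrose inverse of L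
  have hMPt : IsMoorePenrose L Lplusᵀ := by
    refine ⟨?_, ?_, ?_, ?_⟩
    · have := congrArg Matrix.transpose h1
      rw [Matrix.transpose_mul, Matrix.transpose_mul, hLsym] at this
      rw [Matrix.mul_assoc]
      exact this
    · have := congrArg Matrix.transpose h2
      rw [Matrix.transpose_mul, Matrix.transpose_mul, hLsym] at this
      rw [Matrix.mul_assoc]
      exact this
    · have e : L * Lplusᵀ = (Lplus * L)ᵀ := by
        rw [Matrix.transpose_mul, hLsym]
      rw [e, Matrix.transpose_transpose, h4]
    · have e : Lplusᵀ * L = (L * Lplus)ᵀ := by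
        rw [Matrix.transpose_mul, hLsym]
      rw [e, Matrix.transpose_transpose, h3]
  have hPsym : Lplusᵀ = Lplus := (mp_unique hMPt ⟨h1, h2, h3, h4⟩)
  have hcomm : Lplus * L = L * Lplus := by
    have := h3
    rwa [Matrix.transpose_mul, hPsym, hLsym] at this
  set m : Fin n → ℝ := Pi.single i 1 - Pi.single j 1 with hm
  set u : Fin n → ℝ := Lplus *ᵥ m with hu
  set s : ℝ := m ⬝ᵥ u with hs
  have hβ0 : β ≠ 0 := ne_of_gt hβ
  have hn : 0 < n := Fin.pos i
  have hL1 : L *ᵥ (1 : Fin n → ℝ) = 0 := (hker 1).mpr ⟨1, by simp⟩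
  have hone_m : (1 : Fin n → ℝ) ⬝ᵥ m = 0 := by
    simp [hm, dotProduct, Pi.single_apply, Finset.sum_sub_distrib,
      Finset.sum_ite_eq', hij]
  have hQ1 : (L * Lplus) *ᵥ (1 : Fin n → ℝ) = 0 := by
    rw [← hcomm, ← Matrix.mulVec_mulVec, hL1, Matrix.mulVec_zero]
  have hQL : (L * Lplus) * L = L := h1
  have hQLp : (L * Lplus) * Lplus = Lplus := by
    rw [← hcomm]; exact h2
  have hQm : (L * Lplus) *ᵥ m = m := by
    have hw : L *ᵥ (m - (L * Lplus) *ᵥ m) = 0 := by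
      rw [Matrix.mulVec_sub, Matrix.mulVec_mulVec, ← hcomm, ← Matrix.mul_assoc, h1, sub_self]
    obtain ⟨c, hc⟩ := (hker _).mp hw
    have e1 : (1 : Fin n → ℝ) ⬝ᵥ (m - (L * Lplus) *ᵥ m) = c * n := by
      rw [hc]
      simp [dotProduct, Finset.sum_const, mul_comm]
    have e2 : (1 : Fin n → ℝ) ⬝ᵥ (m - (L * Lplus) *ᵥ m) = 0 := by
      rw [dotProduct_sub, hone_m, Matrix.dotProduct_mulVec, ← Matrix.mulVec_transpose,
        h3, hQ1]
      simp
    have hc0 : c = 0 := by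
      have := e1.symm.trans e2
      rcases mul_eq_zero.mp this with h | h
      · exact h
      · exact absurd h (by exact_mod_cast hn.ne')
    have h0 : m - (L * Lplus) *ᵥ m = 0 := by rw [hc, hc0, zero_smul]
    exact (sub_eq_zero.mp h0).symm
  have hLu : L *ᵥ u = m := by
    rw [hu, Matrix.mulVec_mulVec, hQm]
  have hmLp : m ᵥ* Lplus = u := by
    rw [← hPsym, Matrix.vecMul_transpose, ← hu]
  have hQu : (L * Lplus) *ᵥ u = u := by
    rw [hu, Matrix.mulVec_mulVec, hQLp]
  have hs0 : 0 ≤ s := by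
    have h5 : s = u ⬝ᵥ L *ᵥ u := by
      rw [hs, ← hLu, dotProduct_comm]
    rw [h5]
    simpa using hL.dotProduct_mulVec_nonneg u
  have hγ : (β⁻¹ + s) ≠ 0 :=
    ne_of_gt (add_pos_of_pos_of_nonneg (inv_pos.mpr hβ) hs0)
  -- rewrite the candidate pseudoinverse
  have e1 : Lplus * vecMulVec m m * Lplus = vecMulVec u u := by
    rw [mul_vvm, ← hu, vvm_mul, hmLp]
  have key : (L + β • vecMulVec m m) * (Lplus - (β⁻¹ + s)⁻¹ • vecMulVec u u)
      = L * Lplus + (β - (β⁻¹ + s)⁻¹ - β * (β⁻¹ + s)⁻¹ * s) • vecMulVec m u := by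
    rw [add_mul, mul_sub, mul_sub, Matrix.mul_smul, Matrix.mul_smul,
      Matrix.smul_mul, Matrix.smul_mul, mul_vvm L u u, hLu,
      vvm_mul m m Lplus, hmLp, vvm_mul m m (vecMulVec u u), vecMul_vvm,
      ← hs, vvm_smul]
    module
  have hcoef : β - (β⁻¹ + s)⁻¹ - β * (β⁻¹ + s)⁻¹ * s = 0 := by
    field_simp
    ring
  have hAP : (L + β • vecMulVec m m) * (Lplus - (β⁻¹ + s)⁻¹ • vecMulVec u u)
      = L * Lplus := by
    rw [key, hcoef, zero_smul, add_zero]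
  have hAsym : (L + β • vecMulVec m m)ᵀ = L + β • vecMulVec m m := by
    rw [Matrix.transpose_add, Matrix.transpose_smul, vvm_transpose, hLsym]
  have hPsymm : (Lplus - (β⁻¹ + s)⁻¹ • vecMulVec u u)ᵀ
      = Lplus - (β⁻¹ + s)⁻¹ • vecMulVec u u := by
    rw [Matrix.transpose_sub, Matrix.transpose_smul, vvm_transpose, hPsym]
  have hPA : (Lplus - (β⁻¹ + s)⁻¹ • vecMulVec u u) * (L + β • vecMulVec m m)
      = L * Lplus := by
    calc (Lplus - (β⁻¹ + s)⁻¹ • vecMulVec u u) * (L + β • vecMulVec m m)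
        = (Lplus - (β⁻¹ + s)⁻¹ • vecMulVec u u)ᵀ * (L + β • vecMulVec m m)ᵀ := by
          rw [hAsym, hPsymm]
      _ = ((L + β • vecMulVec m m) * (Lplus - (β⁻¹ + s)⁻¹ • vecMulVec u u))ᵀ := by
          rw [Matrix.transpose_mul]
      _ = (L * Lplus)ᵀ := by rw [hAP]
      _ = L * Lplus := h3
  rw [e1]
  refine ⟨?_, ?_, ?_, ?_⟩
  · rw [hAP, mul_add, h1, Matrix.mul_smul, mul_vvm, hQm]
  · rw [hPA, mul_sub, hQLp, Matrix.mul_smul, mul_vvm, hQu]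
  · rw [hAP]; exact h3
  · rw [hPA]; exact h3
end

section
/- Minimize 𝔼H_s(α) = (σ²/2)αᵀL⁺α − 𝟏ᵀΣL⁺α + (1/2)tr(ΣL⁺) over α ∈ ℝⁿ subject to 𝟏ᵀα = 1, where L⁺ is the pseudoinverse of the Laplacian of a connected graph, Σ symmetric PSD, σ² := 𝟏ᵀΣ𝟏 > 0. The unique minimizer is α* = Σ𝟏/σ². -/
open Matrix

lemma sym_dot {n : ℕ} {L : Matrix (Fin n) (Fin n) ℝ} (hL : L.IsHermitian)
    (x y : Fin n → ℝ) : x ⬝ᵥ L *ᵥ y = y ⬝ᵥ L *ᵥ x := by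
  rw [dotProduct_mulVec, ← mulVec_transpose, dotProduct_comm]
  congr 1
  have := hL.eq
  rw [conjTranspose_eq_transpose_of_trivial] at this
  rw [this]

theorem optimal_load_sharing_full {n : ℕ}
    (Lplus S : Matrix (Fin n) (Fin n) ℝ)
    (hLp : Lplus.PosSemidef)
    (hker : ∀ x : Fin n → ℝ, Lplus *ᵥ x = 0 ↔ ∃ c : ℝ, x = c • (1 : Fin n → ℝ))
    (hS : S.PosSemidef)
    (hσ : 0 < (1 : Fin n → ℝ) ⬝ᵥ S *ᵥ (1 : Fin n → ℝ)) :
    (1 : Fin n → ℝ) ⬝ᵥ (((1 : Fin n → ℝ) ⬝ᵥ S *ᵥ (1 : Fin n → ℝ))⁻¹ • (S *ᵥ (1 : Fin n → ℝ))) = 1 ∧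
      ∀ α : Fin n → ℝ, (1 : Fin n → ℝ) ⬝ᵥ α = 1 →
        α ≠ ((1 : Fin n → ℝ) ⬝ᵥ S *ᵥ (1 : Fin n → ℝ))⁻¹ • (S *ᵥ (1 : Fin n → ℝ)) →
        (((1 : Fin n → ℝ) ⬝ᵥ S *ᵥ (1 : Fin n → ℝ)) / 2) *
            ((((1 : Fin n → ℝ) ⬝ᵥ S *ᵥ (1 : Fin n → ℝ))⁻¹ • (S *ᵥ (1 : Fin n → ℝ))) ⬝ᵥ
              Lplus *ᵥ (((1 : Fin n → ℝ) ⬝ᵥ S *ᵥ (1 : Fin n → ℝ))⁻¹ • (S *ᵥ (1 : Fin n → ℝ))))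
          - (1 : Fin n → ℝ) ⬝ᵥ (S * Lplus) *ᵥ
              (((1 : Fin n → ℝ) ⬝ᵥ S *ᵥ (1 : Fin n → ℝ))⁻¹ • (S *ᵥ (1 : Fin n → ℝ)))
          + (1 / 2) * Matrix.trace (S * Lplus)
        < (((1 : Fin n → ℝ) ⬝ᵥ S *ᵥ (1 : Fin n → ℝ)) / 2) * (α ⬝ᵥ Lplus *ᵥ α)
            - (1 : Fin n → ℝ) ⬝ᵥ (S * Lplus) *ᵥ α
            + (1 / 2) * Matrix.trace (S * Lplus) := by
  set v : Fin n → ℝ := S *ᵥ 1 with hv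
  set s : ℝ := (1 : Fin n → ℝ) ⬝ᵥ v with hs
  have hs0 : s ≠ 0 := ne_of_gt hσ
  set β : Fin n → ℝ := s⁻¹ • v with hβ
  have hfeas : (1 : Fin n → ℝ) ⬝ᵥ β = 1 := by
    rw [hβ, dotProduct_smul, ← hs, smul_eq_mul, inv_mul_cancel₀ hs0]
  refine ⟨hfeas, ?_⟩
  intro α hα hne
  set d : Fin n → ℝ := α - β with hd
  have hαd : α = β + d := by rw [hd]; ring_nf
  have hn : (n : ℝ) ≠ 0 := by
    rintro hh
    have : n = 0 := by exact_mod_cast hh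
    subst this
    rw [hs] at hσ
    simp [dotProduct] at hσ
  -- 1ᵀ d = 0
  have h1d : (1 : Fin n → ℝ) ⬝ᵥ d = 0 := by
    rw [hd, dotProduct_sub, hα, hfeas, sub_self]
  -- d ≠ 0
  have hd0 : d ≠ 0 := by
    intro h
    apply hne
    rw [hαd, h, add_zero, hβ]
  -- C := d L d > 0
  have hC : 0 < d ⬝ᵥ Lplus *ᵥ d := by
    rcases lt_or_eq_of_le (hLp.dotProduct_mulVec_nonneg d) with h | h
    · simpa using h
    · exfalso
      have hz : Lplus *ᵥ d = 0 := by
        rw [← hLp.dotProduct_mulVec_zero_iff d]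
        simpa [star] using h.symm
      rcases (hker d).mp hz with ⟨c, hc⟩
      have hcn : (n : ℝ) = 0 ∨ c = 0 := by
        have := h1d
        rw [hc] at this
        simpa [dotProduct, Finset.mul_sum, mul_eq_zero] using this
      rcases hcn with h' | h'
      · exact hn h'
      · exact hd0 (by rw [hc, h', zero_smul])
  -- key: 1 ⬝ᵥ (S*Lplus) *ᵥ x = s * (β ⬝ᵥ Lplus *ᵥ x)
  have hSsym : Sᵀ = S := by
    have := hS.1.eq
    rwa [conjTranspose_eq_transpose_of_trivial] at this
  have hkey : ∀ x : Fin n → ℝ,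
      (1 : Fin n → ℝ) ⬝ᵥ (S * Lplus) *ᵥ x = s * (β ⬝ᵥ Lplus *ᵥ x) := by
    intro x
    rw [← mulVec_mulVec, dotProduct_mulVec (1 : Fin n → ℝ) S, ← mulVec_transpose, hSsym, ← hv,
      hβ, smul_dotProduct, smul_eq_mul, ← mul_assoc, mul_inv_cancel₀ hs0, one_mul]
  -- symmetry cross term
  have hsym : d ⬝ᵥ Lplus *ᵥ β = β ⬝ᵥ Lplus *ᵥ d := sym_dot hLp.1 d β
  rw [hαd, hkey, hkey]
  simp only [add_dotProduct, dotProduct_add, mulVec_add, hsym]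
  nlinarith [hσ, hC]
end

section
/- With α* = Σ𝟏/σ², the optimal expected stochastic loss equals (1/2)(tr(ΣL⁺) − (1/σ²)𝟏ᵀΣL⁺Σ𝟏), and this quantity is nonnegative. -/
open Matrix Finset

lemma cs_key {n : ℕ} (C : Matrix (Fin n) (Fin n) ℝ) (u : Fin n → ℝ) :
    (C *ᵥ u) ⬝ᵥ (C *ᵥ u) ≤ (Cᵀ * C).trace * (u ⬝ᵥ u) := by
  have h1 : (C *ᵥ u) ⬝ᵥ (C *ᵥ u) = ∑ i, (∑ j, C i j * u j) ^ 2 := by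
    simp [dotProduct, mulVec, sq]
  have h2 : (Cᵀ * C).trace = ∑ i, ∑ j, C i j ^ 2 := by
    rw [Finset.sum_comm]
    simp [Matrix.trace, Matrix.mul_apply, Matrix.diag, sq]
  rw [h1, h2, Finset.sum_mul]
  apply Finset.sum_le_sum
  intro i _
  have := Finset.sum_mul_sq_le_sq_mul_sq Finset.univ (fun j => C i j) u
  simpa [dotProduct, sq] using this

lemma dotT {n : ℕ} (M : Matrix (Fin n) (Fin n) ℝ) (x z : Fin n → ℝ) :
    (M *ᵥ x) ⬝ᵥ z = x ⬝ᵥ Mᵀ *ᵥ z := by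
  rw [dotProduct_mulVec, vecMul_transpose]

theorem optimal_expected_stochastic_loss {n : ℕ}
    (Lplus S : Matrix (Fin n) (Fin n) ℝ)
    (hLp : Lplus.PosSemidef)
    (hL1 : Lplus *ᵥ (1 : Fin n → ℝ) = 0)
    (hS : S.PosSemidef)
    (hσ : 0 < (1 : Fin n → ℝ) ⬝ᵥ S *ᵥ (1 : Fin n → ℝ)) :
    (((1 : Fin n → ℝ) ⬝ᵥ S *ᵥ (1 : Fin n → ℝ)) / 2) *
          ((((1 : Fin n → ℝ) ⬝ᵥ S *ᵥ (1 : Fin n → ℝ))⁻¹ • (S *ᵥ (1 : Fin n → ℝ))) ⬝ᵥ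
            Lplus *ᵥ (((1 : Fin n → ℝ) ⬝ᵥ S *ᵥ (1 : Fin n → ℝ))⁻¹ • (S *ᵥ (1 : Fin n → ℝ))))
        - (1 : Fin n → ℝ) ⬝ᵥ (S * Lplus) *ᵥ
            (((1 : Fin n → ℝ) ⬝ᵥ S *ᵥ (1 : Fin n → ℝ))⁻¹ • (S *ᵥ (1 : Fin n → ℝ)))
        + (1 / 2) * Matrix.trace (S * Lplus)
      = (1 / 2) * (Matrix.trace (S * Lplus) -
          ((1 : Fin n → ℝ) ⬝ᵥ S *ᵥ (1 : Fin n → ℝ))⁻¹ *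
            ((1 : Fin n → ℝ) ⬝ᵥ (S * Lplus * S) *ᵥ (1 : Fin n → ℝ))) ∧
      0 ≤ (1 / 2) * (Matrix.trace (S * Lplus) -
          ((1 : Fin n → ℝ) ⬝ᵥ S *ᵥ (1 : Fin n → ℝ))⁻¹ *
            ((1 : Fin n → ℝ) ⬝ᵥ (S * Lplus * S) *ᵥ (1 : Fin n → ℝ))) := by
  set o : Fin n → ℝ := (1 : Fin n → ℝ) with ho
  have hSt : Sᵀ = S := hS.isHermitian
  set σ2 : ℝ := o ⬝ᵥ S *ᵥ o with hσ2
  set q : ℝ := o ⬝ᵥ (S * Lplus * S) *ᵥ o with hq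
  set t : ℝ := Matrix.trace (S * Lplus) with ht
  have hσ0 : σ2 ≠ 0 := ne_of_gt hσ
  have hquad : (S *ᵥ o) ⬝ᵥ Lplus *ᵥ (S *ᵥ o) = q := by
    rw [mulVec_mulVec, dotT, hSt, mulVec_mulVec, ← Matrix.mul_assoc, hq]
  have hlin : o ⬝ᵥ (S * Lplus) *ᵥ (S *ᵥ o) = q := by
    rw [mulVec_mulVec]
  constructor
  · rw [smul_dotProduct, mulVec_smul, dotProduct_smul, smul_eq_mul, smul_eq_mul,
      hquad, mulVec_smul, dotProduct_smul, smul_eq_mul, hlin]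
    field_simp
    ring
  · have hq' : q ≤ t * σ2 := by
      open scoped MatrixOrder in
      set B := CFC.sqrt S with hB
      open scoped MatrixOrder in
      set R := CFC.sqrt Lplus with hR
      open scoped MatrixOrder in
      have hBB : B * B = S := CFC.sqrt_mul_sqrt_self S hS.nonneg
      open scoped MatrixOrder in
      have hRR : R * R = Lplus := CFC.sqrt_mul_sqrt_self Lplus hLp.nonneg
      open scoped MatrixOrder in
      have hBt : Bᵀ = B := (CFC.sqrt_nonneg S).posSemidef.isHermitian
      open scoped MatrixOrder in
      have hRt : Rᵀ = R := (CFC.sqrt_nonneg Lplus).posSemidef.isHermitian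
      have key := cs_key (R * B) (B *ᵥ o)
      have e1 : (R * B) *ᵥ (B *ᵥ o) ⬝ᵥ (R * B) *ᵥ (B *ᵥ o) = q := by
        rw [mulVec_mulVec, dotT, mulVec_mulVec, hq]
        congr 1
        rw [transpose_mul, transpose_mul, hBt, hRt,
          show R * B * B = R * S by rw [Matrix.mul_assoc, hBB],
          show B * (B * R) = S * R by rw [← Matrix.mul_assoc, hBB],
          Matrix.mul_assoc, ← Matrix.mul_assoc R R S, hRR, ← Matrix.mul_assoc]
      have e2 : ((R * B)ᵀ * (R * B)).trace = t := by
        rw [transpose_mul, hRt, hBt, ht]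
        rw [show B * R * (R * B) = B * Lplus * B by
          rw [Matrix.mul_assoc, ← Matrix.mul_assoc R R B, hRR, ← Matrix.mul_assoc]]
        rw [trace_mul_comm, ← Matrix.mul_assoc, hBB]
      have e3 : (B *ᵥ o) ⬝ᵥ (B *ᵥ o) = σ2 := by
        rw [dotT, hBt, mulVec_mulVec, hBB, hσ2]
      rw [e1, e2, e3] at key
      exact key
    have h2 : σ2⁻¹ * q ≤ t := by
      have h3 := mul_le_mul_of_nonneg_left hq' (le_of_lt (inv_pos.2 hσ))
      rwa [mul_comm t σ2, ← mul_assoc, inv_mul_cancel₀ hσ0, one_mul] at h3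
    linarith
end

section
/- Define H_k := (1/C(n,k)) Σ_{B⊆V, |B|=k} [ (σ²/2)(α_B)ᵀL⁺α_B − 𝟏ᵀΣL⁺α_B + (1/2)tr(ΣL⁺) ] where α_B = (1/k)Σ_{i∈B} eᵢ. Then H_k = C₁ + C₂/k, where C₁ = (1/2)tr(ΣL⁺) − σ²·tr(L⁺)/(2n(n−1)) and C₂ = σ²·tr(L⁺)/(2(n−1)). -/
open Matrix

section Aux

open Finset

private lemma card_filter_superset {α : Type*} [DecidableEq α] (s t : Finset α) (k : ℕ)
    (hts : t ⊆ s) (htk : t.card ≤ k) :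
    ((powersetCard k s).filter (fun B => t ⊆ B)).card = (s.card - t.card).choose (k - t.card) := by
  rw [← Finset.card_sdiff_of_subset hts, ← Finset.card_powersetCard (k - t.card) (s \ t)]
  apply Finset.card_bij' (fun B _ => B \ t) (fun C _ => C ∪ t)
  · intro B hB
    simp only [mem_filter, mem_powersetCard] at hB
    obtain ⟨⟨hBs, hBk⟩, htB⟩ := hB
    simp only [mem_powersetCard]
    exact ⟨sdiff_subset_sdiff hBs Subset.rfl, by rw [card_sdiff_of_subset htB, hBk]⟩
  · intro C hC
    simp only [mem_powersetCard] at hC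
    obtain ⟨hCs, hCk⟩ := hC
    have hdisj : Disjoint C t := disjoint_of_subset_left hCs sdiff_disjoint
    simp only [mem_filter, mem_powersetCard]
    refine ⟨⟨union_subset (hCs.trans (sdiff_subset)) hts, ?_⟩, subset_union_right⟩
    rw [card_union_of_disjoint hdisj, hCk]
    omega
  · intro B hB
    simp only [mem_filter] at hB
    exact sdiff_union_of_subset hB.2
  · intro C hC
    simp only [mem_powersetCard] at hC
    have hdisj : Disjoint C t := disjoint_of_subset_left hC.1 sdiff_disjoint
    exact union_sdiff_cancel_right hdisj

private lemma swap_single {n k : ℕ} (f : Fin n → ℝ) :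
    ∑ B ∈ powersetCard k (univ : Finset (Fin n)), ∑ i ∈ B, f i
      = ∑ i, (((powersetCard k (univ : Finset (Fin n))).filter
          (fun B => i ∈ B)).card : ℝ) * f i := by
  have h1 : ∀ B : Finset (Fin n), ∑ i ∈ B, f i = ∑ i : Fin n, if i ∈ B then f i else 0 := by
    intro B
    rw [Finset.sum_ite_mem, Finset.univ_inter]
  simp_rw [h1]
  rw [Finset.sum_comm]
  refine Finset.sum_congr rfl fun i _ => ?_
  rw [Finset.sum_ite, Finset.sum_const_zero, add_zero, Finset.sum_const, nsmul_eq_mul]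

private lemma swap_double {n k : ℕ} (g : Fin n → Fin n → ℝ) :
    ∑ B ∈ powersetCard k (univ : Finset (Fin n)), ∑ i ∈ B, ∑ j ∈ B, g i j
      = ∑ i, ∑ j, (((powersetCard k (univ : Finset (Fin n))).filter
          (fun B => i ∈ B ∧ j ∈ B)).card : ℝ) * g i j := by
  have h1 : ∀ B : Finset (Fin n), ∑ i ∈ B, ∑ j ∈ B, g i j
      = ∑ i : Fin n, ∑ j : Fin n, if i ∈ B ∧ j ∈ B then g i j else 0 := by
    intro B
    have h2 : ∀ i : Fin n, ∑ j : Fin n, (if i ∈ B ∧ j ∈ B then g i j else 0)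
        = if i ∈ B then ∑ j ∈ B, g i j else 0 := by
      intro i
      by_cases hi : i ∈ B <;> simp [hi, Finset.sum_ite_mem, Finset.univ_inter]
    simp_rw [h2]
    rw [Finset.sum_ite_mem, Finset.univ_inter]
  simp_rw [h1]
  rw [Finset.sum_comm]
  refine Finset.sum_congr rfl fun i _ => ?_
  rw [Finset.sum_comm]
  refine Finset.sum_congr rfl fun j _ => ?_
  rw [Finset.sum_ite, Finset.sum_const_zero, add_zero, Finset.sum_const, nsmul_eq_mul]

private lemma dp_sum {n : ℕ} (u : Fin n → ℝ) {ι : Type*} (B : Finset ι) (w : ι → Fin n → ℝ) :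
    u ⬝ᵥ (∑ i ∈ B, w i) = ∑ i ∈ B, u ⬝ᵥ w i := by
  simp only [dotProduct, Finset.sum_apply, Finset.mul_sum]
  exact Finset.sum_comm

private lemma dp_sum' {n : ℕ} (v : Fin n → ℝ) {ι : Type*} (B : Finset ι) (w : ι → Fin n → ℝ) :
    (∑ i ∈ B, w i) ⬝ᵥ v = ∑ i ∈ B, w i ⬝ᵥ v := by
  simp only [dotProduct, Finset.sum_apply, Finset.sum_mul]
  exact Finset.sum_comm

private lemma single_quad {n : ℕ} (M : Matrix (Fin n) (Fin n) ℝ) (i j : Fin n) :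
    (Pi.single i 1 : Fin n → ℝ) ⬝ᵥ M *ᵥ (Pi.single j 1) = M i j := by
  simp [dotProduct, mulVec, Pi.single_apply]

private lemma one_dot_single {n : ℕ} (M : Matrix (Fin n) (Fin n) ℝ) (i : Fin n) :
    (1 : Fin n → ℝ) ⬝ᵥ M *ᵥ (Pi.single i 1) = ∑ p, M p i := by
  simp [dotProduct, mulVec, Pi.single_apply]

end Aux

theorem average_loss_k_controllables {n k : ℕ} (hn : 2 ≤ n) (hk1 : 1 ≤ k) (hkn : k ≤ n)
    (Lplus S : Matrix (Fin n) (Fin n) ℝ)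
    (hLp : Lplus.PosSemidef)
    (hL1 : Lplus *ᵥ (1 : Fin n → ℝ) = 0)
    (hS : S.PosSemidef) :
    (n.choose k : ℝ)⁻¹ *
        ∑ B ∈ Finset.powersetCard k (Finset.univ : Finset (Fin n)),
          ((((1 : Fin n → ℝ) ⬝ᵥ S *ᵥ (1 : Fin n → ℝ)) / 2) *
              (((k : ℝ)⁻¹ • ∑ i ∈ B, (Pi.single i 1 : Fin n → ℝ)) ⬝ᵥ
                Lplus *ᵥ ((k : ℝ)⁻¹ • ∑ i ∈ B, (Pi.single i 1 : Fin n → ℝ)))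
            - (1 : Fin n → ℝ) ⬝ᵥ (S * Lplus) *ᵥ
                ((k : ℝ)⁻¹ • ∑ i ∈ B, (Pi.single i 1 : Fin n → ℝ))
            + (1 / 2) * Matrix.trace (S * Lplus))
      = ((1 / 2) * Matrix.trace (S * Lplus) -
            ((1 : Fin n → ℝ) ⬝ᵥ S *ᵥ (1 : Fin n → ℝ)) * Matrix.trace Lplus /
              (2 * n * (n - 1)))
        + (((1 : Fin n → ℝ) ⬝ᵥ S *ᵥ (1 : Fin n → ℝ)) * Matrix.trace Lplus /
            (2 * (n - 1))) / k := by
  classical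
  set P := Finset.powersetCard k (Finset.univ : Finset (Fin n)) with hP
  set σ2 : ℝ := (1 : Fin n → ℝ) ⬝ᵥ S *ᵥ (1 : Fin n → ℝ) with hσ2
  -- basic nonvanishing facts
  have hn0 : (n : ℝ) ≠ 0 := by positivity
  have hk0 : (k : ℝ) ≠ 0 := by positivity
  have hn1 : (n : ℝ) - 1 ≠ 0 := by
    have : (2 : ℝ) ≤ (n : ℝ) := by exact_mod_cast hn
    linarith
  have hNpos : 0 < n.choose k := Nat.choose_pos hkn
  have hN0 : (n.choose k : ℝ) ≠ 0 := by positivity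
  -- row sums of Lplus vanish
  have hrow : ∀ i : Fin n, ∑ j, Lplus i j = 0 := by
    intro i
    have := congrFun hL1 i
    simpa [mulVec, dotProduct] using this
  -- total sum of S * Lplus columns vanish
  have hSL1 : (S * Lplus) *ᵥ (1 : Fin n → ℝ) = 0 := by
    rw [← Matrix.mulVec_mulVec, hL1, Matrix.mulVec_zero]
  have hSLrow : ∀ p : Fin n, ∑ i, (S * Lplus) p i = 0 := by
    intro p
    have := congrFun hSL1 p
    simpa [mulVec, dotProduct] using this
  -- per-B simplifications
  have hquad : ∀ B : Finset (Fin n),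
      (((k : ℝ)⁻¹ • ∑ i ∈ B, (Pi.single i 1 : Fin n → ℝ)) ⬝ᵥ
          Lplus *ᵥ ((k : ℝ)⁻¹ • ∑ i ∈ B, (Pi.single i 1 : Fin n → ℝ)))
        = (k : ℝ)⁻¹ * ((k : ℝ)⁻¹ * ∑ i ∈ B, ∑ j ∈ B, Lplus i j) := by
    intro B
    rw [Matrix.mulVec_smul, dotProduct_smul, smul_dotProduct]
    rw [smul_eq_mul, smul_eq_mul]
    congr 1
    congr 1
    have hms : Lplus *ᵥ (∑ i ∈ B, (Pi.single i 1 : Fin n → ℝ))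
        = ∑ j ∈ B, Lplus *ᵥ (Pi.single j 1 : Fin n → ℝ) :=
      map_sum Lplus.mulVecLin _ _
    rw [hms, dp_sum, Finset.sum_comm (f := fun i j => Lplus i j)]
    refine Finset.sum_congr rfl fun i _ => ?_
    rw [dp_sum']
    exact Finset.sum_congr rfl fun j _ => single_quad Lplus j i
  have hlin : ∀ B : Finset (Fin n),
      ((1 : Fin n → ℝ) ⬝ᵥ (S * Lplus) *ᵥ
          ((k : ℝ)⁻¹ • ∑ i ∈ B, (Pi.single i 1 : Fin n → ℝ)))
        = (k : ℝ)⁻¹ * ∑ i ∈ B, ∑ p, (S * Lplus) p i := by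
    intro B
    rw [Matrix.mulVec_smul, dotProduct_smul, smul_eq_mul]
    congr 1
    have hms : (S * Lplus) *ᵥ (∑ i ∈ B, (Pi.single i 1 : Fin n → ℝ))
        = ∑ i ∈ B, (S * Lplus) *ᵥ (Pi.single i 1 : Fin n → ℝ) :=
      map_sum (S * Lplus).mulVecLin _ _
    rw [hms, dp_sum]
    exact Finset.sum_congr rfl fun i _ => one_dot_single _ i
  -- counting
  have hcard1 : ∀ i : Fin n, (P.filter (fun B => i ∈ B)).card = (n-1).choose (k-1) := by
    intro i
    have h := card_filter_superset (Finset.univ : Finset (Fin n)) {i} k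
      (Finset.subset_univ _) (by simpa using hk1)
    simpa [Finset.singleton_subset_iff, Finset.card_univ] using h
  have hA' : ((n-1).choose (k-1) : ℝ) = (n.choose k : ℝ) * k / n := by
    have hnat : n * (n-1).choose (k-1) = n.choose k * k := by
      have h := Nat.add_one_mul_choose_eq (n-1) (k-1)
      have e1 : n - 1 + 1 = n := by omega
      have e2 : k - 1 + 1 = k := by omega
      rw [e1, e2] at h
      exact h
    have := congrArg (fun m : ℕ => (m : ℝ)) hnat
    push_cast at this
    field_simp
    linarith [this]
  set Dr : ℝ := (n.choose k : ℝ) * k * ((k:ℝ) - 1) / ((n:ℝ) * ((n:ℝ) - 1)) with hDr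
  have hcard2 : ∀ i j : Fin n, i ≠ j →
      ((P.filter (fun B => i ∈ B ∧ j ∈ B)).card : ℝ) = Dr := by
    intro i j hij
    rcases eq_or_lt_of_le hk1 with hk | hk2
    · -- k = 1 : filter is empty
      have hk : k = 1 := hk.symm
      have hempty : P.filter (fun B => i ∈ B ∧ j ∈ B) = ∅ := by
        rw [Finset.filter_eq_empty_iff]
        intro B hB
        rw [hP, Finset.mem_powersetCard] at hB
        rintro ⟨hi, hj⟩
        have : ({i, j} : Finset (Fin n)) ⊆ B := by
          intro x hx
          simp only [Finset.mem_insert, Finset.mem_singleton] at hx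
          rcases hx with rfl | rfl <;> assumption
        have hle := Finset.card_le_card this
        rw [Finset.card_insert_of_notMem (by simpa using hij), Finset.card_singleton,
          hB.2, hk] at hle
        omega
      rw [hempty]
      simp [hDr, hk]
    · -- 2 ≤ k
      have hk2' : 2 ≤ k := hk2
      have hpred : (fun B : Finset (Fin n) => i ∈ B ∧ j ∈ B)
          = (fun B => ({i, j} : Finset (Fin n)) ⊆ B) := by
        funext B
        simp [Finset.insert_subset_iff]
      have hcardij : ({i, j} : Finset (Fin n)).card = 2 := by
        rw [Finset.card_insert_of_notMem (by simpa using hij), Finset.card_singleton]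
      have h := card_filter_superset (Finset.univ : Finset (Fin n)) {i, j} k
        (Finset.subset_univ _) (by rw [hcardij]; exact hk2')
      rw [hcardij, Finset.card_univ, Fintype.card_fin] at h
      have hfe : P.filter (fun B => i ∈ B ∧ j ∈ B)
          = (Finset.powersetCard k (Finset.univ : Finset (Fin n))).filter
              (fun B => ({i, j} : Finset (Fin n)) ⊆ B) := by
        rw [hP]
        exact Finset.filter_congr (fun B _ => by simp [Finset.insert_subset_iff])
      rw [hfe, h]
      -- nat identity : (n-1) * (n-2).choose (k-2) = (n-1).choose (k-1) * (k-1)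
      have hnat : (n-1) * (n-2).choose (k-2) = (n-1).choose (k-1) * (k-1) := by
        have h2 := Nat.add_one_mul_choose_eq (n-2) (k-2)
        have e1 : n - 2 + 1 = n - 1 := by omega
        have e2 : k - 2 + 1 = k - 1 := by omega
        rw [e1, e2] at h2
        exact h2
      have hcast := congrArg (fun m : ℕ => (m : ℝ)) hnat
      push_cast [Nat.cast_sub (by omega : 1 ≤ n), Nat.cast_sub hk1] at hcast
      rw [hA'] at hcast
      rw [hDr]
      field_simp at hcast ⊢
      linear_combination hcast
  -- total sums
  have htrL : Matrix.trace Lplus = ∑ i, Lplus i i := rfl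
  have hcsum : ∑ i, (∑ p, (S * Lplus) p i) = 0 := by
    rw [Finset.sum_comm]
    simp [hSLrow]
  have hQ : ∑ B ∈ P, ∑ i ∈ B, ∑ j ∈ B, Lplus i j
      = (((n-1).choose (k-1) : ℝ) - Dr) * Matrix.trace Lplus := by
    rw [hP, swap_double (fun i j => Lplus i j)]
    have hsplit : ∀ i : Fin n,
        ∑ j, (((Finset.powersetCard k (Finset.univ : Finset (Fin n))).filter
            (fun B => i ∈ B ∧ j ∈ B)).card : ℝ) * Lplus i j
          = ((n-1).choose (k-1) : ℝ) * Lplus i i + Dr * (0 - Lplus i i) := by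
      intro i
      rw [← Finset.add_sum_erase _ _ (Finset.mem_univ i)]
      congr 1
      · have hfe : (Finset.powersetCard k (Finset.univ : Finset (Fin n))).filter
            (fun B => i ∈ B ∧ i ∈ B)
            = (Finset.powersetCard k (Finset.univ : Finset (Fin n))).filter (fun B => i ∈ B) :=
          Finset.filter_congr (fun B _ => by simp)
        rw [hfe, ← hP, hcard1]
      · have : ∀ j ∈ Finset.univ.erase i,
            (((Finset.powersetCard k (Finset.univ : Finset (Fin n))).filter
              (fun B => i ∈ B ∧ j ∈ B)).card : ℝ) * Lplus i j = Dr * Lplus i j := by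
          intro j hj
          rw [hcard2 i j (Finset.ne_of_mem_erase hj).symm]
        rw [Finset.sum_congr rfl this, ← Finset.mul_sum,
          Finset.sum_erase_eq_sub (Finset.mem_univ i), hrow i]
    rw [Finset.sum_congr rfl (fun i _ => hsplit i)]
    rw [Finset.sum_add_distrib, ← Finset.mul_sum, ← Finset.mul_sum, htrL]
    rw [Finset.sum_sub_distrib]
    simp only [Finset.sum_const_zero]
    ring
  have hC : ∑ B ∈ P, ∑ i ∈ B, (∑ p, (S * Lplus) p i) = 0 := by
    rw [hP, swap_single]
    have : ∀ i : Fin n, ∀ _ : i ∈ (Finset.univ : Finset (Fin n)),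
        (((Finset.powersetCard k (Finset.univ : Finset (Fin n))).filter
          (fun B => i ∈ B)).card : ℝ) * (∑ p, (S * Lplus) p i)
        = ((n-1).choose (k-1) : ℝ) * (∑ p, (S * Lplus) p i) := by
      intro i _
      rw [← hP, hcard1]
    rw [Finset.sum_congr rfl this, ← Finset.mul_sum, hcsum, mul_zero]
  have hcardP : (P.card : ℝ) = (n.choose k : ℝ) := by
    rw [hP, Finset.card_powersetCard, Finset.card_univ, Fintype.card_fin]
  -- assemble
  have hmain : ∑ B ∈ P,
      ((σ2 / 2) *
          (((k : ℝ)⁻¹ • ∑ i ∈ B, (Pi.single i 1 : Fin n → ℝ)) ⬝ᵥ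
            Lplus *ᵥ ((k : ℝ)⁻¹ • ∑ i ∈ B, (Pi.single i 1 : Fin n → ℝ)))
        - (1 : Fin n → ℝ) ⬝ᵥ (S * Lplus) *ᵥ
            ((k : ℝ)⁻¹ • ∑ i ∈ B, (Pi.single i 1 : Fin n → ℝ))
        + (1 / 2) * Matrix.trace (S * Lplus))
      = σ2 / 2 * ((k : ℝ)⁻¹ * ((k : ℝ)⁻¹ *
          ((((n-1).choose (k-1) : ℝ) - Dr) * Matrix.trace Lplus)))
        + (n.choose k : ℝ) * ((1 / 2) * Matrix.trace (S * Lplus)) := by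
    have hterm : ∀ B ∈ P,
        ((σ2 / 2) *
            (((k : ℝ)⁻¹ • ∑ i ∈ B, (Pi.single i 1 : Fin n → ℝ)) ⬝ᵥ
              Lplus *ᵥ ((k : ℝ)⁻¹ • ∑ i ∈ B, (Pi.single i 1 : Fin n → ℝ)))
          - (1 : Fin n → ℝ) ⬝ᵥ (S * Lplus) *ᵥ
              ((k : ℝ)⁻¹ • ∑ i ∈ B, (Pi.single i 1 : Fin n → ℝ))
          + (1 / 2) * Matrix.trace (S * Lplus))
        = σ2 / 2 * ((k : ℝ)⁻¹ * ((k : ℝ)⁻¹ * ∑ i ∈ B, ∑ j ∈ B, Lplus i j))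
          - (k : ℝ)⁻¹ * (∑ i ∈ B, ∑ p, (S * Lplus) p i)
          + (1 / 2) * Matrix.trace (S * Lplus) := by
      intro B _
      rw [hquad B, hlin B]
    rw [Finset.sum_congr rfl hterm]
    rw [Finset.sum_add_distrib, Finset.sum_sub_distrib, Finset.sum_const, ← Finset.mul_sum,
      ← Finset.mul_sum, ← Finset.mul_sum, hQ, ← Finset.mul_sum, hC, mul_zero, sub_zero,
      nsmul_eq_mul, hcardP]
  rw [hmain]
  rw [hA', hDr, htrL]
  field_simp
  ring
end
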